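/- Let M be a left divisibility monoid with hypercube map h. A product h_p ⋯ h_1 of nontrivial hypercubes is a right normal form (i.e., h_i = h(h_p ⋯ h_i) for all 1 ≤ i ≤ p) if and only if each adjacent pair satisfies h_i = h(h_{i+1} h_i) for 1 ≤ i < p. -/

import Mathlib

section Defs
variable {M : Type*} [Monoid M]

/-- `a` left-divides `b` (`b` is a right multiple of `a`). -/
def LDvd (a b : M) : Prop := ∃ d, b = a * d

/-- `a` right-divides `b` (`b` is a left multiple of `a`). -/
def RDvd (a b : M) : Prop := ∃ d, b = d * a

/-- `a` is an irreducible element of the monoid. -/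
def IsIrred (a : M) : Prop := a ≠ 1 ∧ ∀ b c, a = b * c → b = 1 ∨ c = 1

/-- `c` is a right lcm of `a` and `b`. -/
def IsRightLcm (a b c : M) : Prop :=
  LDvd a c ∧ LDvd b c ∧ ∀ m, LDvd a m → LDvd b m → LDvd c m

/-- `c` is a right lcm of the set `s`. -/
def IsRightLcmSet (s : Set M) (c : M) : Prop :=
  (∀ x ∈ s, LDvd x c) ∧ ∀ m, (∀ x ∈ s, LDvd x m) → LDvd c m

/-- A hypercube: a right lcm of a finite set of irreducible elements. -/
def IsHypercube (h : M) : Prop :=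
  ∃ s : Finset M, (∀ x ∈ s, IsIrred x) ∧ IsRightLcmSet (↑s) h

/-- `h` is the maximal hypercube right-dividing `a`. -/
def IsMaxHC (a h : M) : Prop :=
  IsHypercube h ∧ RDvd h a ∧ ∀ k, IsHypercube k → RDvd k a → RDvd k h

/-- The list `L = [h_p, …, h_1]` of nontrivial hypercubes is a right normal form:
`h_i` is the maximal hypercube right-dividing `h_p ⋯ h_i`. -/
def IsRNF (hmap : M → M) (L : List M) : Prop :=
  (∀ x ∈ L, IsHypercube x ∧ x ≠ 1) ∧
  ∀ n (hn : n < L.length), hmap ((L.take (n + 1)).prod) = L.get ⟨n, hn⟩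

end Defs

/-- A left divisibility monoid: cancellative, generated by its finitely many
irreducibles, any two elements have a left gcd, and every set of left divisors
is a finite distributive lattice under left divisibility. -/
def IsLDM (M : Type*) [Monoid M] : Prop :=
  (∀ a b c : M, a * b = a * c → b = c) ∧
  (∀ a b c : M, b * a = c * a → b = c) ∧
  (∃ S : Finset M, (∀ x ∈ S, IsIrred x) ∧ Submonoid.closure (S : Set M) = ⊤) ∧
  (∀ a b : M, ∃ g, LDvd g a ∧ LDvd g b ∧ ∀ c, LDvd c a → LDvd c b → LDvd c g) ∧
  (∀ a : M, {b : M | LDvd b a}.Finite) ∧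
  (∀ a : M, ∃ i : DistribLattice {b : M // LDvd b a},
      ∀ x y : {b : M // LDvd b a}, i.le x y ↔ LDvd x.1 y.1)

/-!
Write `h` for the maximal-hypercube map. The adjacent conditions propagate along the word by
induction, because `h(h_p ⋯ h_i) = h(h(h_p ⋯ h_{i+1}) h_i)` by the identity `h(ab) = h(h(a) b)`.

For that identity, let a hypercube `k` right-divide `ab = dk`, put `g = gcd(d, a)` and `a = g k'`.
In the distributive lattice of left divisors of `dk`, the modular law makes `x ↦ x ∨ d` an
isomorphism from `[g, a]` onto `[d, a ∨ d]`, which lies inside `[d, dk]`. Left divisors of a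
hypercube are hypercubes and hypercubes are invariant under such isomorphisms, so `k'` is a
hypercube right-dividing `a`, hence `h(a)`; cancelling then shows that `k` right-divides `h(a) b`.
-/

section Divisibility
variable {M : Type*} [Monoid M]

theorem LDvd.refl (a : M) : LDvd a a := ⟨1, (mul_one a).symm⟩

theorem LDvd.trans {a b c : M} (hab : LDvd a b) (hbc : LDvd b c) : LDvd a c := by
  obtain ⟨x, rfl⟩ := hab
  obtain ⟨y, rfl⟩ := hbc
  exact ⟨x * y, mul_assoc a x y⟩

theorem one_ldvd (a : M) : LDvd 1 a := ⟨a, (one_mul a).symm⟩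

theorem ldvd_mul_right (a b : M) : LDvd a (a * b) := ⟨b, rfl⟩

theorem LDvd.mul_left {a b : M} (h : LDvd a b) (c : M) : LDvd (c * a) (c * b) := by
  obtain ⟨x, rfl⟩ := h
  exact ⟨x, (mul_assoc c a x).symm⟩

theorem RDvd.refl (a : M) : RDvd a a := ⟨1, (one_mul a).symm⟩

theorem RDvd.trans {a b c : M} (hab : RDvd a b) (hbc : RDvd b c) : RDvd a c := by
  obtain ⟨x, rfl⟩ := hab
  obtain ⟨y, rfl⟩ := hbc
  exact ⟨y * x, (mul_assoc y x a).symm⟩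

/-- Junk value `1` when `x` does not left-divide `y`. -/
noncomputable def ldiv (x y : M) : M :=
  open Classical in if h : LDvd x y then h.choose else 1

theorem mul_ldiv {x y : M} (h : LDvd x y) : x * ldiv x y = y := by
  rw [ldiv, dif_pos h]
  exact h.choose_spec.symm

/-- Junk value `1` when `a` and `b` have no right lcm. -/
noncomputable def rightLcm (a b : M) : M :=
  open Classical in if h : ∃ c, IsRightLcm a b c then h.choose else 1

theorem isRightLcm_rightLcm_of_exists {a b : M} (h : ∃ c, IsRightLcm a b c) :
    IsRightLcm a b (rightLcm a b) := by
  rw [rightLcm, dif_pos h]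
  exact h.choose_spec

end Divisibility

namespace IsLDM
variable {M : Type*} [Monoid M]

theorem mul_left_cancel (hM : IsLDM M) {a b c : M} (h : a * b = a * c) : b = c := hM.1 a b c h

theorem mul_right_cancel (hM : IsLDM M) {a b c : M} (h : b * a = c * a) : b = c := hM.2.1 a b c h

theorem ldvd_of_mul_ldvd_mul (hM : IsLDM M) {a b c : M} (h : LDvd (c * a) (c * b)) :
    LDvd a b := by
  obtain ⟨x, hx⟩ := h
  exact ⟨x, hM.mul_left_cancel (by rw [hx, mul_assoc])⟩

def Divisors (_hM : IsLDM M) (m : M) : Type _ := {b : M // LDvd b m}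

noncomputable instance (hM : IsLDM M) (m : M) : DistribLattice (hM.Divisors m) :=
  (hM.2.2.2.2.2 m).choose

theorem Divisors.le_iff {hM : IsLDM M} {m : M} {x y : hM.Divisors m} : x ≤ y ↔ LDvd x.1 y.1 :=
  (hM.2.2.2.2.2 m).choose_spec x y

instance (hM : IsLDM M) (m : M) : OrderBot (hM.Divisors m) where
  bot := ⟨1, one_ldvd m⟩
  bot_le x := Divisors.le_iff.2 (one_ldvd x.1)

theorem ldvd_antisymm (hM : IsLDM M) {a b : M} (hab : LDvd a b) (hba : LDvd b a) : a = b := by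
  have h : (⟨a, hab⟩ : hM.Divisors b) = ⟨b, LDvd.refl b⟩ :=
    le_antisymm (α := hM.Divisors b) (Divisors.le_iff.2 hab) (Divisors.le_iff.2 hba)
  exact congrArg Subtype.val h

theorem eq_one_of_ldvd_one (hM : IsLDM M) {a : M} (h : LDvd a 1) : a = 1 :=
  hM.ldvd_antisymm h (one_ldvd a)

theorem rdvd_antisymm (hM : IsLDM M) {a b : M} (hab : RDvd a b) (hba : RDvd b a) : a = b := by
  obtain ⟨p, rfl⟩ := hab
  obtain ⟨q, hq⟩ := hba
  have hqp : q * p = 1 := hM.mul_right_cancel (by rw [one_mul, mul_assoc, ← hq])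
  have hq1 : q = 1 := hM.eq_one_of_ldvd_one ⟨p, hqp.symm⟩
  rw [hq1, one_mul] at hqp
  rw [hqp, one_mul]

noncomputable def leftGcd (hM : IsLDM M) (a b : M) : M := (hM.2.2.2.1 a b).choose

theorem leftGcd_ldvd_left (hM : IsLDM M) (a b : M) : LDvd (hM.leftGcd a b) a :=
  (hM.2.2.2.1 a b).choose_spec.1

theorem leftGcd_ldvd_right (hM : IsLDM M) (a b : M) : LDvd (hM.leftGcd a b) b :=
  (hM.2.2.2.1 a b).choose_spec.2.1

theorem ldvd_leftGcd (hM : IsLDM M) {a b c : M} (hca : LDvd c a) (hcb : LDvd c b) :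
    LDvd c (hM.leftGcd a b) :=
  (hM.2.2.2.1 a b).choose_spec.2.2 c hca hcb

theorem leftGcd_eq_left (hM : IsLDM M) {a b : M} (h : LDvd a b) : hM.leftGcd a b = a :=
  hM.ldvd_antisymm (hM.leftGcd_ldvd_left a b) (hM.ldvd_leftGcd (LDvd.refl a) h)

theorem rightLcm_eq (hM : IsLDM M) {a b c : M} (h : IsRightLcm a b c) : rightLcm a b = c :=
  have hl := isRightLcm_rightLcm_of_exists ⟨c, h⟩
  hM.ldvd_antisymm (hl.2.2 c h.1 h.2.1) (h.2.2 _ hl.1 hl.2.1)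

theorem rightLcm_eq_left (hM : IsLDM M) {a b : M} (h : LDvd b a) : rightLcm a b = a :=
  hM.rightLcm_eq ⟨LDvd.refl a, h, fun _ hm _ => hm⟩

theorem Divisors.val_inf {hM : IsLDM M} {m : M} (x y : hM.Divisors m) :
    (x ⊓ y).1 = hM.leftGcd x.1 y.1 := by
  let G : hM.Divisors m := ⟨hM.leftGcd x.1 y.1, (hM.leftGcd_ldvd_left _ _).trans x.2⟩
  have hG : G ≤ x ⊓ y := le_inf (Divisors.le_iff.2 (hM.leftGcd_ldvd_left _ _))
    (Divisors.le_iff.2 (hM.leftGcd_ldvd_right _ _))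
  exact hM.ldvd_antisymm (hM.ldvd_leftGcd (Divisors.le_iff.1 inf_le_left)
    (Divisors.le_iff.1 inf_le_right)) (Divisors.le_iff.1 hG)

theorem Divisors.isRightLcm_sup {hM : IsLDM M} {m : M} (x y : hM.Divisors m) :
    IsRightLcm x.1 y.1 (x ⊔ y).1 := by
  refine ⟨Divisors.le_iff.1 le_sup_left, Divisors.le_iff.1 le_sup_right, fun w hxw hyw => ?_⟩
  let G : hM.Divisors m := ⟨hM.leftGcd m w, hM.leftGcd_ldvd_left m w⟩
  have hG : x ⊔ y ≤ G := sup_le (Divisors.le_iff.2 (hM.ldvd_leftGcd x.2 hxw))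
    (Divisors.le_iff.2 (hM.ldvd_leftGcd y.2 hyw))
  exact (Divisors.le_iff.1 hG).trans (hM.leftGcd_ldvd_right m w)

theorem Divisors.val_sup {hM : IsLDM M} {m : M} (x y : hM.Divisors m) :
    (x ⊔ y).1 = rightLcm x.1 y.1 :=
  (hM.rightLcm_eq (Divisors.isRightLcm_sup x y)).symm

theorem isRightLcm_rightLcm (hM : IsLDM M) {x y m : M} (hx : LDvd x m) (hy : LDvd y m) :
    IsRightLcm x y (rightLcm x y) :=
  let X : hM.Divisors m := ⟨x, hx⟩
  isRightLcm_rightLcm_of_exists ⟨_, Divisors.isRightLcm_sup X ⟨y, hy⟩⟩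

theorem leftGcd_rightLcm_of_ldvd (hM : IsLDM M) {x y z m : M} (hxz : LDvd x z)
    (hy : LDvd y m) (hz : LDvd z m) :
    hM.leftGcd (rightLcm x y) z = rightLcm x (hM.leftGcd y z) := by
  let X : hM.Divisors m := ⟨x, hxz.trans hz⟩
  let Y : hM.Divisors m := ⟨y, hy⟩
  let Z : hM.Divisors m := ⟨z, hz⟩
  have h := congrArg Subtype.val (sup_inf_assoc_of_le Y (Divisors.le_iff.2 hxz : X ≤ Z))
  simpa only [Divisors.val_sup, Divisors.val_inf] using h

theorem rightLcm_leftGcd_of_ldvd (hM : IsLDM M) {x y z m : M} (hzx : LDvd z x)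
    (hx : LDvd x m) (hy : LDvd y m) :
    rightLcm (hM.leftGcd x y) z = hM.leftGcd x (rightLcm y z) := by
  let X : hM.Divisors m := ⟨x, hx⟩
  let Y : hM.Divisors m := ⟨y, hy⟩
  let Z : hM.Divisors m := ⟨z, hzx.trans hx⟩
  have h := congrArg Subtype.val (inf_sup_assoc_of_le Y (Divisors.le_iff.2 hzx : Z ≤ X))
  simpa only [Divisors.val_sup, Divisors.val_inf] using h

theorem isIrred_iff (hM : IsLDM M) {y : M} :
    IsIrred y ↔ y ≠ 1 ∧ ∀ v, LDvd v y → v = 1 ∨ v = y := by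
  refine ⟨fun hy => ⟨hy.1, fun v ⟨w, hw⟩ => ?_⟩, fun hy => ⟨hy.1, fun v w hvw => ?_⟩⟩
  · exact (hy.2 v w hw).imp id fun hw1 => by rw [hw, hw1, mul_one]
  · refine (hy.2 v ⟨w, hvw⟩).imp id fun hvy => ?_
    subst hvy
    exact hM.mul_left_cancel (by rw [← hvw, mul_one])

end IsLDM

section Hypercubes
variable {M : Type*} [Monoid M]

theorem IsHypercube.ldvd_of_forall_isIrred {c u : M} (hc : IsHypercube c)
    (h : ∀ y, IsIrred y → LDvd y c → LDvd y u) : LDvd c u := by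
  obtain ⟨s, hs, hsc⟩ := hc
  exact hsc.2 u fun y hy => h y (hs y hy) (hsc.1 y hy)

theorem IsLDM.isHypercube_of_forall_isIrred (hM : IsLDM M) {c : M}
    (h : ∀ u, LDvd u c → (∀ y, IsIrred y → LDvd y c → LDvd y u) → LDvd c u) :
    IsHypercube c := by
  have hfin : {y : M | IsIrred y ∧ LDvd y c}.Finite := (hM.2.2.2.2.1 c).subset fun y hy => hy.2
  refine ⟨hfin.toFinset, fun y hy => (hfin.mem_toFinset.1 hy).1,
    fun y hy => (hfin.mem_toFinset.1 hy).2, fun w hw => ?_⟩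
  have hcw : LDvd c (hM.leftGcd c w) := h _ (hM.leftGcd_ldvd_left c w) fun y hy hyc =>
    hM.ldvd_leftGcd hyc (hw y (hfin.mem_toFinset.2 ⟨hy, hyc⟩))
  exact hcw.trans (hM.leftGcd_ldvd_right c w)

theorem IsHypercube.of_ldvd (hM : IsLDM M) {k q : M} (hk : IsHypercube k) (hqk : LDvd q k) :
    IsHypercube q := by
  classical
  refine hM.isHypercube_of_forall_isIrred fun u huq hu => ?_
  obtain ⟨s, hs, hsk⟩ := hk
  let Q : hM.Divisors k := ⟨q, hqk⟩
  let U : hM.Divisors k := ⟨u, huq.trans hqk⟩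
  let K : hM.Divisors k := ⟨k, LDvd.refl k⟩
  let T : Finset (hM.Divisors k) := s.subtype (LDvd · k)
  have hK : K ≤ T.sup id := IsLDM.Divisors.le_iff.2 <| hsk.2 _ fun y hy =>
    IsLDM.Divisors.le_iff.1 (Finset.le_sup (f := id) (Finset.mem_subtype.2 hy :
      (⟨y, hsk.1 y hy⟩ : hM.Divisors k) ∈ T))
  have hatom : ∀ y ∈ T, Q ⊓ y ≤ U := fun y hy => by
    have hvy : LDvd (Q ⊓ y).1 y.1 := IsLDM.Divisors.le_iff.1 inf_le_right
    rcases ((hM.isIrred_iff.1 (hs _ (Finset.mem_subtype.1 hy))).2 _ hvy) with h1 | h1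
    · exact IsLDM.Divisors.le_iff.2 (h1 ▸ one_ldvd u)
    · have hyq : LDvd y.1 q := h1 ▸ IsLDM.Divisors.le_iff.1 inf_le_left
      exact IsLDM.Divisors.le_iff.2 (h1 ▸ hu _ (hs _ (Finset.mem_subtype.1 hy)) hyq)
  have hQU : Q ≤ U := calc
    Q = Q ⊓ K := (inf_eq_left.2 (IsLDM.Divisors.le_iff.2 hqk)).symm
    _ ≤ Q ⊓ T.sup id := inf_le_inf_left Q hK
    _ = T.sup (Q ⊓ ·) := Finset.sup_inf_distrib_left T id Q
    _ ≤ U := Finset.sup_le hatom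
  exact IsLDM.Divisors.le_iff.1 hQU

structure IsDivisorIso (c : M) (Φ Ψ : M → M) : Prop where
  map_ldvd {e₁ e₂ : M} : LDvd e₁ e₂ → LDvd e₂ c → LDvd (Φ e₁) (Φ e₂)
  symm_map_ldvd {f₁ f₂ : M} : LDvd f₁ f₂ → LDvd f₂ (Φ c) → LDvd (Ψ f₁) (Ψ f₂)
  symm_map_map {e : M} : LDvd e c → Ψ (Φ e) = e
  map_symm_map {f : M} : LDvd f (Φ c) → Φ (Ψ f) = f

namespace IsDivisorIso
variable {c : M} {Φ Ψ : M → M}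

theorem symm_map_ldvd_self (h : IsDivisorIso c Φ Ψ) {f : M} (hf : LDvd f (Φ c)) :
    LDvd (Ψ f) c := by
  simpa only [h.symm_map_map (LDvd.refl c)] using h.symm_map_ldvd hf (LDvd.refl _)

theorem map_one (hM : IsLDM M) (h : IsDivisorIso c Φ Ψ) : Φ 1 = 1 := by
  have h1 := h.map_ldvd (one_ldvd _) (h.symm_map_ldvd_self (one_ldvd _))
  rw [h.map_symm_map (one_ldvd _)] at h1
  exact hM.eq_one_of_ldvd_one h1

theorem symm_map_one (hM : IsLDM M) (h : IsDivisorIso c Φ Ψ) : Ψ 1 = 1 := by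
  simpa only [h.map_one hM] using h.symm_map_map (one_ldvd c)

theorem isIrred_symm_map (hM : IsLDM M) (h : IsDivisorIso c Φ Ψ) {y : M} (hy : IsIrred y)
    (hyc : LDvd y (Φ c)) : IsIrred (Ψ y) := by
  rw [hM.isIrred_iff] at hy ⊢
  refine ⟨fun h1 => hy.1 ?_, fun v hv => ?_⟩
  · rw [← h.map_symm_map hyc, h1, h.map_one hM]
  · have hvc : LDvd v c := hv.trans (h.symm_map_ldvd_self hyc)
    have hΦv := h.map_ldvd hv (h.symm_map_ldvd_self hyc)
    rw [h.map_symm_map hyc] at hΦv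
    rcases hy.2 _ hΦv with h1 | h1
    · left
      rw [← h.symm_map_map hvc, h1, h.symm_map_one hM]
    · right
      rw [← h.symm_map_map hvc, h1]

end IsDivisorIso

theorem IsHypercube.of_isDivisorIso (hM : IsLDM M) {c : M} {Φ Ψ : M → M}
    (h : IsDivisorIso c Φ Ψ) (hc : IsHypercube (Φ c)) : IsHypercube c := by
  refine hM.isHypercube_of_forall_isIrred fun u huc hu => ?_
  have hΦ : LDvd (Φ c) (Φ u) := hc.ldvd_of_forall_isIrred fun y hy hyc => by
    rw [← h.map_symm_map hyc]
    exact h.map_ldvd (hu _ (h.isIrred_symm_map hM hy hyc) (h.symm_map_ldvd_self hyc)) huc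
  have hΨ := h.symm_map_ldvd hΦ (h.map_ldvd huc (LDvd.refl c))
  rwa [h.symm_map_map (LDvd.refl c), h.symm_map_map huc] at hΨ

end Hypercubes

namespace IsLDM
variable {M : Type*} [Monoid M]

theorem ldiv_rightLcm_ldvd (hM : IsLDM M) {a d k : M} (hak : LDvd a (d * k)) :
    LDvd (ldiv d (rightLcm a d)) k := by
  have hlcm := hM.isRightLcm_rightLcm hak (ldvd_mul_right d k)
  refine hM.ldvd_of_mul_ldvd_mul (c := d) ?_
  rw [mul_ldiv hlcm.2.1]
  exact hlcm.2.2 _ hak (ldvd_mul_right d k)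

/-- The diamond isomorphism `[g, a] ≃ [d, a ∨ d]` for `g = gcd(d, a)`, read through left
quotients. -/
theorem isDivisorIso_ldiv_leftGcd (hM : IsLDM M) {a d k : M} (hak : LDvd a (d * k)) :
    IsDivisorIso (ldiv (hM.leftGcd d a) a)
      (fun e => ldiv d (rightLcm (hM.leftGcd d a * e) d))
      (fun f => ldiv (hM.leftGcd d a) (hM.leftGcd (d * f) a)) := by
  set g := hM.leftGcd d a
  set k' := ldiv g a
  have hga : LDvd g a := hM.leftGcd_ldvd_right d a
  have hgk' : g * k' = a := mul_ldiv hga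
  have hge {e : M} (he : LDvd e k') : LDvd (g * e) a := hgk' ▸ he.mul_left g
  have hlcm {e : M} (he : LDvd e k') : IsRightLcm (g * e) d (rightLcm (g * e) d) :=
    hM.isRightLcm_rightLcm ((hge he).trans hak) (ldvd_mul_right d k)
  have hΦ {e : M} (he : LDvd e k') : d * ldiv d (rightLcm (g * e) d) = rightLcm (g * e) d :=
    mul_ldiv (hlcm he).2.1
  have hΨ (f : M) : g * ldiv g (hM.leftGcd (d * f) a) = hM.leftGcd (d * f) a :=
    mul_ldiv (hM.ldvd_leftGcd ((hM.leftGcd_ldvd_left d a).trans (ldvd_mul_right d f)) hga)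
  refine ⟨fun {e₁ e₂} h₁₂ h₂ => ?_, fun {f₁ f₂} h₁₂ _ => ?_, fun {e} he => ?_,
    fun {f} hf => ?_⟩
  · refine hM.ldvd_of_mul_ldvd_mul (c := d) ?_
    rw [hΦ (h₁₂.trans h₂), hΦ h₂]
    exact (hlcm (h₁₂.trans h₂)).2.2 _ ((h₁₂.mul_left g).trans (hlcm h₂).1) (hlcm h₂).2.1
  · refine hM.ldvd_of_mul_ldvd_mul (c := g) ?_
    rw [hΨ, hΨ]
    exact hM.ldvd_leftGcd ((hM.leftGcd_ldvd_left _ _).trans (h₁₂.mul_left d))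
      (hM.leftGcd_ldvd_right _ _)
  · refine hM.mul_left_cancel (a := g) ?_
    rw [hΨ, hΦ he, hM.leftGcd_rightLcm_of_ldvd (hge he) (ldvd_mul_right d k) hak,
      hM.rightLcm_eq_left (ldvd_mul_right g e)]
  · simp only [hgk'] at hf ⊢
    have hdf : LDvd (d * f) (rightLcm a d) :=
      mul_ldiv (hM.isRightLcm_rightLcm hak (ldvd_mul_right d k)).2.1 ▸ hf.mul_left d
    have hΨf : LDvd (ldiv g (hM.leftGcd (d * f) a)) k' := hM.ldvd_of_mul_ldvd_mul <| by
      rw [hΨ, hgk']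
      exact hM.leftGcd_ldvd_right _ _
    refine hM.mul_left_cancel (a := d) ?_
    rw [hΦ hΨf, hΨ, hM.rightLcm_leftGcd_of_ldvd (ldvd_mul_right d f)
      ((hf.trans (hM.ldiv_rightLcm_ldvd hak)).mul_left d) hak, hM.leftGcd_eq_left hdf]

theorem isHypercube_ldiv_leftGcd (hM : IsLDM M) {a d k : M} (hk : IsHypercube k)
    (hak : LDvd a (d * k)) : IsHypercube (ldiv (hM.leftGcd d a) a) := by
  refine (hk.of_ldvd hM ?_).of_isDivisorIso hM (hM.isDivisorIso_ldiv_leftGcd hak)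
  rw [mul_ldiv (hM.leftGcd_ldvd_right d a)]
  exact hM.ldiv_rightLcm_ldvd hak

end IsLDM

section MaximalHypercube
variable {M : Type*} [Monoid M]

theorem IsMaxHC.unique (hM : IsLDM M) {a c c' : M} (hc : IsMaxHC a c) (hc' : IsMaxHC a c') :
    c = c' :=
  hM.rdvd_antisymm (hc'.2.2 c hc.1 hc.2.1) (hc.2.2 c' hc'.1 hc'.2.1)

theorem IsHypercube.isMaxHC_self {c : M} (hc : IsHypercube c) : IsMaxHC c c :=
  ⟨hc, RDvd.refl c, fun _ _ h => h⟩

theorem IsMaxHC.rdvd_mul (hM : IsLDM M) {a b h k : M} (ha : IsMaxHC a h) (hk : IsHypercube k)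
    (hkab : RDvd k (a * b)) : RDvd k (h * b) := by
  obtain ⟨d, hd⟩ := hkab
  set g := hM.leftGcd d a
  have hga : g * ldiv g a = a := mul_ldiv (hM.leftGcd_ldvd_right d a)
  have hk' := hM.isHypercube_ldiv_leftGcd hk (hd ▸ ldvd_mul_right a b)
  obtain ⟨a', ha'⟩ := ha.2.1
  obtain ⟨e, he⟩ := ha.2.2 _ hk' ⟨g, hga.symm⟩
  have hg : g = a' * e := hM.mul_right_cancel (a := ldiv g a) <| by
    rw [hga, mul_assoc, ← he, ← ha']
  obtain ⟨t, ht⟩ : LDvd g d := hM.leftGcd_ldvd_left d a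
  refine ⟨e * t, hM.mul_left_cancel (a := a') ?_⟩
  calc a' * (h * b) = a * b := by rw [ha', mul_assoc]
    _ = d * k := hd
    _ = a' * (e * t * k) := by rw [ht, hg]; simp only [mul_assoc]

theorem IsMaxHC.mul_right (hM : IsLDM M) {a b c h : M} (hab : IsMaxHC (a * b) c)
    (ha : IsMaxHC a h) : IsMaxHC (h * b) c := by
  obtain ⟨a', ha'⟩ := ha.2.1
  refine ⟨hab.1, ha.rdvd_mul hM hab.1 hab.2.1, fun k hk hkhb => hab.2.2 k hk ?_⟩
  exact hkhb.trans ⟨a', by rw [ha', mul_assoc]⟩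

end MaximalHypercube

/-- Proposition 21: normality of a word of nontrivial hypercubes is a local
condition on adjacent pairs. -/
theorem stmt_8 {M : Type*} [Monoid M] (hM : IsLDM M)
    (hmap : M → M) (hspec : ∀ a : M, IsMaxHC a (hmap a))
    (L : List M) (hL : ∀ x ∈ L, IsHypercube x ∧ x ≠ 1) :
    (∀ n (hn : n < L.length), hmap ((L.take (n + 1)).prod) = L.get ⟨n, hn⟩) ↔
    (∀ n (hn : n + 1 < L.length),
      hmap (L.get ⟨n, Nat.lt_of_succ_lt hn⟩ * L.get ⟨n + 1, hn⟩) = L.get ⟨n + 1, hn⟩) := by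
  have hmap_mul (a b : M) : hmap (a * b) = hmap (hmap a * b) :=
    ((hspec (a * b)).mul_right hM (hspec a)).unique hM (hspec _)
  have hmap_self {c : M} (hc : IsHypercube c) : hmap c = c :=
    (hspec c).unique hM hc.isMaxHC_self
  have hprod (n : ℕ) (hn : n < L.length) :
      (L.take (n + 1)).prod = (L.take n).prod * L.get ⟨n, hn⟩ := by
    rw [List.take_add_one, List.prod_append, List.getElem?_eq_getElem hn]
    simp
  constructor
  · intro hnf n hn
    rw [← hnf n (Nat.lt_of_succ_lt hn), ← hmap_mul, ← hprod]
    exact hnf (n + 1) hn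
  · intro hadj n
    induction n with
    | zero =>
      intro hn
      rw [hprod 0 hn, List.take_zero, List.prod_nil, one_mul]
      exact hmap_self (hL _ (List.get_mem _ _)).1
    | succ n ih =>
      intro hn
      rw [hprod (n + 1) hn, hmap_mul, ih (Nat.lt_of_succ_lt hn)]
      exact hadj n hn
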